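/- Let S be a finite semigroup, h : A⁺ → S surjective, and P a set of linked pairs closed under conjugation with L = [P]. Let Q be the maximal subset of S × S with [P] = [Q]. Then for all u, v ∈ A⁺: u v^ω ∈ L if and only if (h(u), h(v)) ∈ Q. -/
import Mathlib

/-- The product under the morphism induced by `f : A → S` of a finite word,
`none` on the empty word. -/
def wordProd {A S : Type*} [Semigroup S] (f : A → S) : List A → Option S
  | [] => none
  | a :: l => some (l.foldl (fun s b => s * f b) (f a))

/-- The factor `α[i..j)` of an infinite word `α`. -/
def seg {A : Type*} (α : ℕ → A) (i j : ℕ) : List A :=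
  (List.range (j - i)).map fun k => α (i + k)

/-- `α ∈ [s][t]^ω`: the infinite word `α` factors as `u v₁ v₂ ⋯` with
`h(u) = s` and `h(vᵢ) = t` for all `i`. -/
def InSE {A S : Type*} [Semigroup S] (f : A → S) (s t : S) (α : ℕ → A) : Prop :=
  ∃ c : ℕ → ℕ, 0 < c 0 ∧ StrictMono c ∧
    wordProd f (seg α 0 (c 0)) = some s ∧
    ∀ i, wordProd f (seg α (c i) (c (i + 1))) = some t

/-- `[P] = ⋃_{(s,t) ∈ P} [s][t]^ω`. -/
def LangOf {A S : Type*} [Semigroup S] (f : A → S) (P : Set (S × S)) : Set (ℕ → A) :=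
  {α | ∃ p ∈ P, InSE f p.1 p.2 α}

/-- `(s, e)` is a linked pair: `e` is idempotent and `s * e = s`. -/
def IsLinkedPair {S : Type*} [Semigroup S] (s e : S) : Prop := e * e = e ∧ s * e = s

/-- Conjugacy of pairs. -/
def ConjPairs {S : Type*} [Semigroup S] (p q : S × S) : Prop :=
  ∃ x y : S, p.1 * x = q.1 ∧ x * y = p.2 ∧ y * x = q.2

/-- The infinite word `u v^ω` (for `v ≠ []`). -/
def upow {A : Type*} [Inhabited A] (u v : List A) : ℕ → A := fun n =>
  if n < u.length then u.getD n default
  else v.getD ((n - u.length) % v.length) default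

section Helpers

variable {A S : Type*} [Semigroup S]

/-- The monoid-valued word product. -/
def wp1 (f : A → S) (l : List A) : WithOne S := (l.map (fun a => (f a : WithOne S))).prod

lemma wp1_nil (f : A → S) : wp1 f [] = 1 := rfl

lemma wp1_append (f : A → S) (l₁ l₂ : List A) :
    wp1 f (l₁ ++ l₂) = wp1 f l₁ * wp1 f l₂ := by
  simp [wp1]

lemma coe_foldl (f : A → S) (l : List A) (s : S) :
    ((l.foldl (fun s b => s * f b) s : S) : WithOne S) = ↑s * wp1 f l := by
  induction l generalizing s with
  | nil => simp [wp1]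
  | cons a l ih =>
    simp only [List.foldl_cons, ih, wp1, List.map_cons, List.prod_cons, WithOne.coe_mul]
    rw [mul_assoc]

lemma wordProd_eq_some_iff (f : A → S) (l : List A) (s : S) :
    wordProd f l = some s ↔ wp1 f l = ↑s := by
  cases l with
  | nil => simp [wordProd, wp1_nil, eq_comm, WithOne.one_ne_coe]
  | cons a l =>
    have h : wp1 f (a :: l) = ↑(l.foldl (fun s b => s * f b) (f a)) := by
      rw [coe_foldl]; simp [wp1, List.map_cons, List.prod_cons]
    simp [wordProd, h, WithOne.coe_inj, eq_comm]

lemma seg_self {A : Type*} (α : ℕ → A) (i : ℕ) : seg α i i = [] := by simp [seg]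

lemma seg_append {A : Type*} (α : ℕ → A) {i j k : ℕ} (h₁ : i ≤ j) (h₂ : j ≤ k) :
    seg α i k = seg α i j ++ seg α j k := by
  unfold seg
  have h : k - i = (j - i) + (k - j) := by omega
  rw [h, List.range_add, List.map_append, List.map_map]
  congr 1
  apply List.map_congr_left
  intro x _
  simp only [Function.comp_apply]
  congr 1
  omega

lemma wp1_seg_append (f : A → S) (α : ℕ → A) {i j k : ℕ} (h₁ : i ≤ j) (h₂ : j ≤ k) :
    wp1 f (seg α i k) = wp1 f (seg α i j) * wp1 f (seg α j k) := by
  rw [seg_append α h₁ h₂, wp1_append]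

lemma seg_eq_list {A : Type*} [Inhabited A] (α : ℕ → A) (i n : ℕ) (l : List A)
    (hlen : l.length = n)
    (h : ∀ k, k < n → α (i + k) = l.getD k default) : seg α i (i + n) = l := by
  apply List.ext_getElem
  · simp [seg, hlen]
  · intro k h1 h2
    have hk : k < n := by simpa [seg] using h1
    simp only [seg, Nat.add_sub_cancel_left] at *
    rw [List.getElem_map, List.getElem_range]
    rw [h k hk, List.getD_eq_getElem l default h2]

lemma seg_upow_prefix {A : Type*} [Inhabited A] (u v : List A) :
    seg (upow u v) 0 u.length = u := by
  have := seg_eq_list (upow u v) 0 u.length u rfl ?_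
  · simpa using this
  · intro k hk
    simp [upow, hk]

lemma seg_upow_take {A : Type*} [Inhabited A] (u v : List A) (p m : ℕ) (hm : m ≤ v.length) :
    seg (upow u v) (u.length + p * v.length) (u.length + p * v.length + m) = v.take m := by
  apply seg_eq_list
  · simp [Nat.min_eq_left hm]
  · intro k hk
    have hkv : k < v.length := lt_of_lt_of_le hk hm
    have h1 : ¬ (u.length + p * v.length + k < u.length) := by omega
    simp only [upow, h1, if_false]
    have h2 : u.length + p * v.length + k - u.length = p * v.length + k := by omega
    rw [h2]
    have h3 : (p * v.length + k) % v.length = k := by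
      rw [Nat.add_comm, Nat.add_mul_mod_self_right]
      exact Nat.mod_eq_of_lt hkv
    rw [h3]
    rw [List.getD_eq_getElem v default hkv, List.getD_eq_getElem _ default (by simp; omega)]
    simp [List.getElem_take]

lemma seg_upow_drop {A : Type*} [Inhabited A] (u v : List A) (p r : ℕ) (hr : r ≤ v.length) :
    seg (upow u v) (u.length + p * v.length + r) (u.length + (p + 1) * v.length) = v.drop r := by
  have hend : u.length + (p + 1) * v.length = (u.length + p * v.length + r) + (v.length - r) := by
    have : (p + 1) * v.length = p * v.length + v.length := by ring
    omega
  rw [hend]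
  apply seg_eq_list
  · simp
  · intro k hk
    have hrk : r + k < v.length := by omega
    have h1 : ¬ (u.length + p * v.length + r + k < u.length) := by omega
    simp only [upow, h1, if_false]
    have h2 : u.length + p * v.length + r + k - u.length = p * v.length + (r + k) := by omega
    rw [h2]
    have h3 : (p * v.length + (r + k)) % v.length = r + k := by
      rw [Nat.add_comm, Nat.add_mul_mod_self_right]
      exact Nat.mod_eq_of_lt hrk
    rw [h3]
    rw [List.getD_eq_getElem v default hrk, List.getD_eq_getElem _ default (by simp; omega)]
    simp [List.getElem_drop]

lemma wp1_upow_block {A : Type*} [Inhabited A] (f : A → S) (u v : List A) (sv : S)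
    (hv : wp1 f v = ↑sv) (p q : ℕ) :
    wp1 f (seg (upow u v) (u.length + p * v.length) (u.length + (p + q) * v.length))
      = (sv : WithOne S) ^ q := by
  induction q with
  | zero => simp [seg_self, wp1_nil]
  | succ q ih =>
    have h1 : u.length + p * v.length ≤ u.length + (p + q) * v.length :=
      Nat.add_le_add_left (Nat.mul_le_mul_right _ (by omega)) _
    have h2 : u.length + (p + q) * v.length ≤ u.length + (p + (q + 1)) * v.length :=
      Nat.add_le_add_left (Nat.mul_le_mul_right _ (by omega)) _
    rw [wp1_seg_append f _ h1 h2, ih]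
    have hseg : seg (upow u v) (u.length + (p + q) * v.length)
        (u.length + (p + (q + 1)) * v.length) = v := by
      have h := seg_upow_take u v (p + q) v.length le_rfl
      rw [List.take_length] at h
      have harith : u.length + (p + q) * v.length + v.length
          = u.length + (p + (q + 1)) * v.length := by ring
      rw [harith] at h
      exact h
    rw [hseg, hv, pow_succ]

lemma wp1_seg_cuts (f : A → S) (α : ℕ → A) (c : ℕ → ℕ) (hmono : StrictMono c)
    (t : WithOne S) (hseg : ∀ i, wp1 f (seg α (c i) (c (i + 1))) = t) :
    ∀ i q, wp1 f (seg α (c i) (c (i + q))) = t ^ q := by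
  intro i q
  induction q with
  | zero => simp [seg_self, wp1_nil]
  | succ q ih =>
    rw [show i + (q + 1) = i + q + 1 from rfl,
      wp1_seg_append f α (hmono.monotone (Nat.le_add_right i q))
      (hmono.monotone (by omega : i + q ≤ i + q + 1)), ih, hseg (i + q), pow_succ]

lemma coe_mul_pow_linked {s e : S} (hse : s * e = s) :
    ∀ i, (s : WithOne S) * (e : WithOne S) ^ i = ↑s := by
  intro i
  induction i with
  | zero => simp
  | succ i ih => rw [pow_succ, ← mul_assoc, ih, ← WithOne.coe_mul, hse]

lemma finite_withOne [Fintype S] : Finite (WithOne S) := by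
  have : Function.Surjective (fun o : Option S => (Option.rec 1 (fun s => ↑s) o : WithOne S)) := by
    intro x
    refine WithOne.recOneCoe ⟨none, rfl⟩ (fun s => ⟨some s, rfl⟩) x
  exact Finite.of_surjective _ this

lemma idem_pow {M : Type*} [Monoid M] {c : M} (hc : c * c = c) :
    ∀ t, 1 ≤ t → c ^ t = c := by
  intro t ht
  induction t with
  | zero => omega
  | succ t ih =>
    rcases Nat.eq_zero_or_pos t with h | h
    · simp [h]
    · rw [pow_succ, ih h, hc]

lemma exists_idem_pow [Fintype S] (b : WithOne S) : ∃ n, 1 ≤ n ∧ b ^ n * b ^ n = b ^ n := by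
  have : Finite (WithOne S) := finite_withOne
  obtain ⟨i, j, hne, heq⟩ := Finite.exists_ne_map_eq_of_infinite (fun n : ℕ => b ^ (n + 1))
  wlog hij : i < j generalizing i j
  · exact this j i hne.symm heq.symm (by omega)
  set d := j - i with hd
  have hd1 : 1 ≤ d := by omega
  have key : ∀ N, i + 1 ≤ N → b ^ (N + d) = b ^ N := by
    intro N hN
    have h1 : b ^ (N + d) = b ^ (i + 1 + d) * b ^ (N - (i + 1)) := by
      rw [← pow_add]; congr 1; omega
    rw [h1]
    have h2 : b ^ (i + 1 + d) = b ^ (i + 1) := by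
      have h3 : i + 1 + d = j + 1 := by omega
      rw [h3, ← heq]
    rw [h2, ← pow_add]
    congr 1; omega
  have key2 : ∀ t N, i + 1 ≤ N → b ^ (N + t * d) = b ^ N := by
    intro t
    induction t with
    | zero => simp
    | succ t ih =>
      intro N hN
      have h1 : N + (t + 1) * d = (N + t * d) + d := by ring
      rw [h1, key _ (by omega), ih N hN]
  refine ⟨(i + 1) * d, Nat.mul_pos (by omega) hd1, ?_⟩
  rw [← pow_add]
  exact key2 (i + 1) ((i + 1) * d) (Nat.le_mul_of_pos_right _ hd1)

lemma exists_coe_pow (b : S) : ∀ n, 1 ≤ n → ∃ t : S, ((b : WithOne S)) ^ n = ↑t := by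
  intro n hn
  induction n with
  | zero => omega
  | succ n ih =>
    rcases Nat.eq_zero_or_pos n with h | h
    · exact ⟨b, by simp [h]⟩
    · obtain ⟨t, ht⟩ := ih h
      exact ⟨t * b, by rw [pow_succ, ht]; rfl⟩

lemma exists_coe_mul_pow (w b : S) (j : ℕ) : ∃ t : S, (↑w : WithOne S) * (↑b) ^ j = ↑t := by
  rcases Nat.eq_zero_or_pos j with h | h
  · exact ⟨w, by simp [h]⟩
  · obtain ⟨t, ht⟩ := exists_coe_pow b j h
    exact ⟨w * t, by rw [ht]; rfl⟩

lemma exists_coe_pow_mul (w b : S) (j : ℕ) : ∃ t : S, ((b : WithOne S)) ^ j * ↑w = ↑t := by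
  rcases Nat.eq_zero_or_pos j with h | h
  · exact ⟨w, by simp [h]⟩
  · obtain ⟨t, ht⟩ := exists_coe_pow b j h
    exact ⟨t * w, by rw [ht]; rfl⟩

lemma combine_pow {M : Type*} [Monoid M] (x y b : M) (hxy : x * y = b) (p q : ℕ) :
    (y * (b ^ p * x)) * (y * (b ^ q * x)) = y * (b ^ (p + 1 + q) * x) := by
  have h : b ^ (p + 1 + q) = b ^ p * (x * y) * b ^ q := by
    rw [hxy, pow_add, pow_add, pow_one]
  rw [h]
  simp only [mul_assoc]

end Helpers

/-- Lemma: with `P` a set of linked pairs closed under conjugation, `L = [P]`, and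
`Q = {(s,t) : [s][t]^ω ⊆ L}` the maximal set with `[P] = [Q]`, we have
`u v^ω ∈ L ↔ (h(u), h(v)) ∈ Q` for all `u, v ∈ A⁺`. -/
theorem upow_mem_iff_maximal {A S : Type*} [Inhabited A] [Semigroup S] [Fintype S]
    (f : A → S) (hsurj : ∀ s : S, ∃ l : List A, wordProd f l = some s)
    (P : Set (S × S)) (hP : ∀ p ∈ P, IsLinkedPair p.1 p.2)
    (hclosed : ∀ p q : S × S, p ∈ P → IsLinkedPair q.1 q.2 → ConjPairs p q → q ∈ P)
    (L : Set (ℕ → A)) (hL : L = LangOf f P)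
    (u v : List A) (su sv : S)
    (hu : wordProd f u = some su) (hv : wordProd f v = some sv) :
    upow u v ∈ L ↔ (su, sv) ∈ {q : S × S | ∀ α, InSE f q.1 q.2 α → α ∈ L} := by
  have hvne : v ≠ [] := by intro h; subst h; simp [wordProd] at hv
  have hune : u ≠ [] := by intro h; subst h; simp [wordProd] at hu
  have hvpos : 0 < v.length := List.length_pos_iff.mpr hvne
  have hupos : 0 < u.length := List.length_pos_iff.mpr hune
  have hu' : wp1 f u = (su : WithOne S) := (wordProd_eq_some_iff f u su).mp hu
  have hv' : wp1 f v = (sv : WithOne S) := (wordProd_eq_some_iff f v sv).mp hv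
  constructor
  · -- hard direction
    intro hmem α hα
    rw [hL] at hmem
    obtain ⟨⟨s, e⟩, hpP, c, hc0, hcmono, hcpre, hcseg⟩ := hmem
    obtain ⟨hee, hse⟩ := hP _ hpP
    rw [wordProd_eq_some_iff] at hcpre
    have hcseg' : ∀ i, wp1 f (seg (upow u v) (c i) (c (i + 1))) = (e : WithOne S) :=
      fun i => (wordProd_eq_some_iff f _ _).mp (hcseg i)
    have hπ : ∀ i, wp1 f (seg (upow u v) 0 (c i)) = (s : WithOne S) := by
      intro i
      rw [wp1_seg_append f _ (Nat.zero_le (c 0)) (hcmono.monotone (Nat.zero_le i))]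
      have h := wp1_seg_cuts f _ c hcmono _ hcseg' 0 i
      rw [Nat.zero_add] at h
      rw [hcpre, h, coe_mul_pow_linked hse]
    -- pigeonhole on residues of the cut positions
    obtain ⟨I, J, hIu, hIJ, hres⟩ : ∃ I J, u.length ≤ I ∧ I < J ∧
        (c I - u.length) % v.length = (c J - u.length) % v.length := by
      obtain ⟨i0, j0, hne, heq⟩ := Finite.exists_ne_map_eq_of_infinite
        (fun i : ℕ => (⟨(c (u.length + i) - u.length) % v.length,
          Nat.mod_lt _ hvpos⟩ : Fin v.length))
      have hval : (c (u.length + i0) - u.length) % v.length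
          = (c (u.length + j0) - u.length) % v.length := congrArg Fin.val heq
      rcases hne.lt_or_gt with h | h
      · exact ⟨u.length + i0, u.length + j0, Nat.le_add_right _ _, by omega, hval⟩
      · exact ⟨u.length + j0, u.length + i0, Nat.le_add_right _ _, by omega, hval.symm⟩
    have hcI : u.length ≤ c I := le_trans hIu hcmono.le_apply
    have hcJ : c I < c J := hcmono hIJ
    have hcJu : u.length ≤ c J := le_trans hcI (le_of_lt hcJ)
    obtain ⟨k, hkdef⟩ : ∃ k, k = (c I - u.length) / v.length := ⟨_, rfl⟩
    obtain ⟨r, hrdef⟩ : ∃ r, r = (c I - u.length) % v.length := ⟨_, rfl⟩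
    obtain ⟨k', hk'def⟩ : ∃ k', k' = (c J - u.length) / v.length := ⟨_, rfl⟩
    have hrv : r < v.length := by rw [hrdef]; exact Nat.mod_lt _ hvpos
    have hI' : c I = u.length + k * v.length + r := by
      have hdm := Nat.div_add_mod (c I - u.length) v.length
      rw [← hkdef, ← hrdef] at hdm
      have h1 : k * v.length + r = c I - u.length := by rw [Nat.mul_comm]; exact hdm
      have h2 : u.length + (k * v.length + r) = c I := by rw [h1, Nat.add_sub_cancel' hcI]
      rw [← h2, Nat.add_assoc]
    have hJ' : c J = u.length + k' * v.length + r := by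
      have hdm := Nat.div_add_mod (c J - u.length) v.length
      rw [← hk'def] at hdm
      have hres' : (c J - u.length) % v.length = r := by rw [hrdef, hres]
      rw [hres'] at hdm
      have h1 : k' * v.length + r = c J - u.length := by rw [Nat.mul_comm]; exact hdm
      have h2 : u.length + (k' * v.length + r) = c J := by rw [h1, Nat.add_sub_cancel' hcJu]
      rw [← h2, Nat.add_assoc]
    have hkk' : k < k' := by
      by_contra hcon
      push_neg at hcon
      have : k' * v.length ≤ k * v.length := Nat.mul_le_mul_right _ hcon
      have : c J ≤ c I := by rw [hI', hJ']; linarith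
      omega
    obtain ⟨m, hmdef⟩ : ∃ m, k' = k + 1 + m := ⟨k' - k - 1, by omega⟩
    -- the prefix product identity : ↑s = ↑su * b^k * (take r)
    have hblk := wp1_upow_block f u v sv hv' 0 k
    simp only [Nat.zero_mul, Nat.add_zero, Nat.zero_add] at hblk
    have hsx : (su : WithOne S) * ((sv : WithOne S) ^ k * wp1 f (v.take r)) = ↑s := by
      have h := hπ I
      have hsplit1 : u.length ≤ u.length + k * v.length := Nat.le_add_right _ _
      have hsplit2 : u.length + k * v.length ≤ c I := by
        rw [hI']; exact Nat.le_add_right _ _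
      rw [wp1_seg_append f (upow u v) (Nat.zero_le u.length) (le_trans hsplit1 hsplit2),
        wp1_seg_append f (upow u v) hsplit1 hsplit2, seg_upow_prefix, hu', hblk, hI',
        seg_upow_take u v k r (le_of_lt hrv)] at h
      exact h
    -- the segment identity : ↑e = (drop r) * b^m * (take r)
    have hE : wp1 f (v.drop r) * ((sv : WithOne S) ^ m * wp1 f (v.take r)) = ↑e := by
      have hcut := wp1_seg_cuts f _ c hcmono _ hcseg' I (J - I)
      rw [show I + (J - I) = J from by omega] at hcut
      have hEpow : wp1 f (seg (upow u v) (c I) (c J)) = (e : WithOne S) := by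
        rw [hcut, idem_pow (by rw [← WithOne.coe_mul, hee]) _ (by omega)]
      have hmid1 : c I ≤ u.length + (k + 1) * v.length := by
        rw [hI']
        have : (k + 1) * v.length = k * v.length + v.length := by ring
        rw [this]
        omega
      have hmid2 : u.length + (k + 1) * v.length ≤ u.length + (k + 1 + m) * v.length :=
        Nat.add_le_add_left (Nat.mul_le_mul_right _ (by omega)) _
      have hmid3 : u.length + (k + 1 + m) * v.length ≤ c J := by
        rw [hJ', hmdef]; exact Nat.le_add_right _ _
      rw [wp1_seg_append f (upow u v) hmid1 (le_trans hmid2 hmid3),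
        wp1_seg_append f (upow u v) hmid2 hmid3] at hEpow
      have hd1 : seg (upow u v) (c I) (u.length + (k + 1) * v.length) = v.drop r := by
        rw [hI']; exact seg_upow_drop u v k r (le_of_lt hrv)
      have hd2 := wp1_upow_block f u v sv hv' (k + 1) m
      have hd3 : seg (upow u v) (u.length + (k + 1 + m) * v.length) (c J) = v.take r := by
        have h := seg_upow_take u v (k + 1 + m) r (le_of_lt hrv)
        rw [show u.length + (k + 1 + m) * v.length + r = c J from by rw [hJ', hmdef]] at h
        exact h
      rw [hd1, hd2, hd3] at hEpow
      exact hEpow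
    have hxy : wp1 f (v.take r) * wp1 f (v.drop r) = (sv : WithOne S) := by
      rw [← wp1_append, List.take_append_drop]; exact hv'
    -- choice of the idempotent power
    obtain ⟨n0, hn01, hn0idem⟩ := exists_idem_pow (sv : WithOne S)
    obtain ⟨n, hndef⟩ : ∃ n, n = n0 * ((m + 1) * (k + 1)) := ⟨_, rfl⟩
    have hn1 : 1 ≤ n := by
      rw [hndef]; exact Nat.mul_pos (by omega) (Nat.mul_pos (by omega) (by omega))
    have hnk : k + 1 ≤ n := by
      rw [hndef]
      calc k + 1 ≤ (m + 1) * (k + 1) := Nat.le_mul_of_pos_left _ (by omega)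
        _ ≤ n0 * ((m + 1) * (k + 1)) := Nat.le_mul_of_pos_left _ (by omega)
    have hbn : (sv : WithOne S) ^ n = (sv : WithOne S) ^ n0 := by
      rw [hndef, pow_mul]
      exact idem_pow hn0idem _ (Nat.mul_pos (by omega) (by omega))
    have hbnidem : (sv : WithOne S) ^ n * (sv : WithOne S) ^ n = (sv : WithOne S) ^ n := by
      rw [hbn]; exact hn0idem
    -- e = y * b^((m+1)t + m) * x for all t
    have hEt : ∀ t, wp1 f (v.drop r) * ((sv : WithOne S) ^ ((m + 1) * t + m)
        * wp1 f (v.take r)) = ↑e := by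
      intro t
      induction t with
      | zero => simpa using hE
      | succ t ih =>
        have harith : (m + 1) * (t + 1) + m = ((m + 1) * t + m) + 1 + m := by ring
        rw [harith, ← combine_pow _ _ _ hxy, ih, hE, ← WithOne.coe_mul, hee]
    -- the conjugating elements
    obtain ⟨T, hTdef⟩ : ∃ T, T = n0 * (k + 1) := ⟨_, rfl⟩
    have hT1 : 1 ≤ T := by rw [hTdef]; exact Nat.mul_pos (by omega) (by omega)
    have hnT : n = (m + 1) * T := by rw [hndef, hTdef]; ring
    have hexp : n - k - 1 + k = (m + 1) * (T - 1) + m := by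
      have h1 : (m + 1) * (T - 1) + (m + 1) = (m + 1) * T := by
        rw [← Nat.mul_succ]; congr 1; omega
      obtain ⟨PP, hPP⟩ : ∃ PP, PP = (m + 1) * (T - 1) := ⟨_, rfl⟩
      obtain ⟨QQ, hQQ⟩ : ∃ QQ, QQ = (m + 1) * T := ⟨_, rfl⟩
      rw [← hPP, ← hQQ] at h1
      rw [← hPP]
      rw [← hQQ] at hnT
      omega
    have hXY : (wp1 f (v.drop r) * (sv : WithOne S) ^ (n - k - 1))
        * ((sv : WithOne S) ^ k * wp1 f (v.take r)) = ↑e := by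
      calc (wp1 f (v.drop r) * (sv : WithOne S) ^ (n - k - 1))
            * ((sv : WithOne S) ^ k * wp1 f (v.take r))
          = wp1 f (v.drop r) * ((sv : WithOne S) ^ (n - k - 1) * (sv : WithOne S) ^ k
            * wp1 f (v.take r)) := by simp only [mul_assoc]
        _ = wp1 f (v.drop r) * ((sv : WithOne S) ^ (n - k - 1 + k) * wp1 f (v.take r)) := by
            rw [pow_add]
        _ = wp1 f (v.drop r) * ((sv : WithOne S) ^ ((m + 1) * (T - 1) + m)
            * wp1 f (v.take r)) := by rw [hexp]
        _ = ↑e := hEt _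
    have hYX : ((sv : WithOne S) ^ k * wp1 f (v.take r))
        * (wp1 f (v.drop r) * (sv : WithOne S) ^ (n - k - 1)) = (sv : WithOne S) ^ n := by
      calc ((sv : WithOne S) ^ k * wp1 f (v.take r))
            * (wp1 f (v.drop r) * (sv : WithOne S) ^ (n - k - 1))
          = (sv : WithOne S) ^ k * ((wp1 f (v.take r) * wp1 f (v.drop r))
            * (sv : WithOne S) ^ (n - k - 1)) := by simp only [mul_assoc]
        _ = (sv : WithOne S) ^ k * ((sv : WithOne S) * (sv : WithOne S) ^ (n - k - 1)) := by
            rw [hxy]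
        _ = (sv : WithOne S) ^ n := by
            rw [← pow_succ', ← pow_add]; congr 1; omega
    have hsX : (s : WithOne S) * (wp1 f (v.drop r) * (sv : WithOne S) ^ (n - k - 1))
        = ↑su * (sv : WithOne S) ^ n := by
      calc (s : WithOne S) * (wp1 f (v.drop r) * (sv : WithOne S) ^ (n - k - 1))
          = (↑su * ((sv : WithOne S) ^ k * wp1 f (v.take r)))
            * (wp1 f (v.drop r) * (sv : WithOne S) ^ (n - k - 1)) := by rw [hsx]
        _ = ↑su * ((sv : WithOne S) ^ k * ((wp1 f (v.take r) * wp1 f (v.drop r))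
            * (sv : WithOne S) ^ (n - k - 1))) := by simp only [mul_assoc]
        _ = ↑su * ((sv : WithOne S) ^ k * ((sv : WithOne S)
            * (sv : WithOne S) ^ (n - k - 1))) := by rw [hxy]
        _ = ↑su * (sv : WithOne S) ^ n := by
            rw [← pow_succ', ← pow_add]
            congr 2
            omega
    -- produce the elements of S
    obtain ⟨e₁, he₁⟩ := exists_coe_pow sv n hn1
    obtain ⟨s₁, hs₁⟩ : ∃ s₁ : S, (su : WithOne S) * (sv : WithOne S) ^ n = ↑s₁ :=
      exists_coe_mul_pow su sv n
    obtain ⟨ys, hys⟩ : ∃ ys : S, wp1 f (v.drop r) = ↑ys := by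
      have hdropne : v.drop r ≠ [] := by
        apply List.ne_nil_of_length_pos
        simp only [List.length_drop]
        omega
      cases hdv : v.drop r with
      | nil => exact absurd hdv hdropne
      | cons a l =>
        exact ⟨l.foldl (fun s b => s * f b) (f a),
          by exact (wordProd_eq_some_iff f (a :: l) _).mp rfl⟩
    obtain ⟨x₁, hx₁⟩ : ∃ x₁ : S, (wp1 f (v.drop r) * (sv : WithOne S) ^ (n - k - 1))
        * (sv : WithOne S) ^ n = ↑x₁ := by
      rw [hys, mul_assoc, ← pow_add]
      exact exists_coe_mul_pow ys sv _
    obtain ⟨y₁, hy₁⟩ : ∃ y₁ : S, (sv : WithOne S) ^ n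
        * ((sv : WithOne S) ^ k * wp1 f (v.take r)) = ↑y₁ := by
      rw [← mul_assoc, ← pow_add]
      rcases Nat.eq_zero_or_pos r with hr0 | hr0
      · rw [hr0]
        simp only [List.take_zero, wp1_nil, mul_one]
        exact exists_coe_pow sv (n + k) (by omega)
      · obtain ⟨xs, hxs⟩ : ∃ xs : S, wp1 f (v.take r) = ↑xs := by
          have htkne : v.take r ≠ [] := by
            apply List.ne_nil_of_length_pos
            simp only [List.length_take]
            omega
          cases hdv : v.take r with
          | nil => exact absurd hdv htkne
          | cons a l =>
            exact ⟨l.foldl (fun s b => s * f b) (f a),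
              by exact (wordProd_eq_some_iff f (a :: l) _).mp rfl⟩
        rw [hxs]
        exact exists_coe_pow_mul xs sv _
    -- the new linked pair is in P
    have hs₁e₁ : (s₁ : WithOne S) = ↑su * (sv : WithOne S) ^ n := hs₁.symm
    have hq_linked : IsLinkedPair s₁ e₁ := by
      constructor
      · apply WithOne.coe_inj.mp
        rw [WithOne.coe_mul, ← he₁, hbnidem]
      · apply WithOne.coe_inj.mp
        rw [WithOne.coe_mul, ← he₁, hs₁e₁, mul_assoc, hbnidem]
    have hconj : ConjPairs (s, e) (s₁, e₁) := by
      refine ⟨x₁, y₁, ?_, ?_, ?_⟩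
      · apply WithOne.coe_inj.mp
        rw [WithOne.coe_mul, ← hx₁, ← mul_assoc, hsX, mul_assoc, hbnidem, hs₁]
      · apply WithOne.coe_inj.mp
        rw [WithOne.coe_mul, ← hx₁, ← hy₁]
        calc ((wp1 f (v.drop r) * (sv : WithOne S) ^ (n - k - 1)) * (sv : WithOne S) ^ n)
              * ((sv : WithOne S) ^ n * ((sv : WithOne S) ^ k * wp1 f (v.take r)))
            = (wp1 f (v.drop r) * (sv : WithOne S) ^ (n - k - 1))
              * (((sv : WithOne S) ^ n * (sv : WithOne S) ^ n)
              * ((sv : WithOne S) ^ k * wp1 f (v.take r))) := by simp only [mul_assoc]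
          _ = (wp1 f (v.drop r) * (sv : WithOne S) ^ (n - k - 1))
              * (((sv : WithOne S) ^ k * wp1 f (v.take r))
              * ((wp1 f (v.drop r) * (sv : WithOne S) ^ (n - k - 1))
              * ((sv : WithOne S) ^ k * wp1 f (v.take r)))) := by
              rw [hbnidem, ← hYX]; simp only [mul_assoc]
          _ = ((wp1 f (v.drop r) * (sv : WithOne S) ^ (n - k - 1))
              * ((sv : WithOne S) ^ k * wp1 f (v.take r)))
              * ((wp1 f (v.drop r) * (sv : WithOne S) ^ (n - k - 1))
              * ((sv : WithOne S) ^ k * wp1 f (v.take r))) := by simp only [mul_assoc]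
          _ = (e : WithOne S) := by rw [hXY, ← WithOne.coe_mul, hee]
      · apply WithOne.coe_inj.mp
        rw [WithOne.coe_mul, ← hx₁, ← hy₁, ← he₁]
        calc ((sv : WithOne S) ^ n * ((sv : WithOne S) ^ k * wp1 f (v.take r)))
              * ((wp1 f (v.drop r) * (sv : WithOne S) ^ (n - k - 1)) * (sv : WithOne S) ^ n)
            = (sv : WithOne S) ^ n * ((((sv : WithOne S) ^ k * wp1 f (v.take r))
              * (wp1 f (v.drop r) * (sv : WithOne S) ^ (n - k - 1))) * (sv : WithOne S) ^ n) := by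
              simp only [mul_assoc]
          _ = (sv : WithOne S) ^ n * ((sv : WithOne S) ^ n * (sv : WithOne S) ^ n) := by
              rw [hYX]
          _ = (sv : WithOne S) ^ n := by rw [hbnidem, hbnidem]
    have hq_mem : (s₁, e₁) ∈ P := hclosed (s, e) (s₁, e₁) hpP hq_linked hconj
    -- now decompose α
    obtain ⟨d, hd0, hdmono, hdpre, hdseg⟩ := hα
    rw [wordProd_eq_some_iff] at hdpre
    have hdseg' : ∀ i, wp1 f (seg α (d i) (d (i + 1))) = (sv : WithOne S) :=
      fun i => (wordProd_eq_some_iff f _ _).mp (hdseg i)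
    rw [hL]
    refine ⟨(s₁, e₁), hq_mem, fun i => d (n * (i + 1)), ?_, ?_, ?_, ?_⟩
    · exact lt_of_lt_of_le hd0 (hdmono.monotone (Nat.zero_le _))
    · intro i j hij
      exact hdmono ((Nat.mul_lt_mul_left (show 0 < n by omega)).mpr (by omega))
    · rw [wordProd_eq_some_iff]
      rw [wp1_seg_append f α (Nat.zero_le (d 0)) (hdmono.monotone (Nat.zero_le _))]
      have hcut := wp1_seg_cuts f α d hdmono _ hdseg' 0 (n * (0 + 1))
      rw [Nat.zero_add] at hcut
      rw [hdpre, hcut, show n * (0 + 1) = n from by ring, hs₁]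
    · intro i
      rw [wordProd_eq_some_iff]
      have hcut := wp1_seg_cuts f α d hdmono _ hdseg' (n * (i + 1)) n
      rw [show n * (i + 1) + n = n * (i + 1 + 1) from by ring] at hcut
      rw [hcut, he₁]
  · -- easy direction
    intro hQ
    apply hQ
    refine ⟨fun i => u.length + i * v.length, by simpa using hupos, ?_, ?_, ?_⟩
    · intro i j hij
      exact Nat.add_lt_add_left ((Nat.mul_lt_mul_right hvpos).mpr hij) _
    · simpa [seg_upow_prefix] using hu
    · intro i
      have h := seg_upow_take u v i v.length le_rfl
      rw [List.take_length] at h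
      have harith : u.length + i * v.length + v.length = u.length + (i + 1) * v.length := by ring
      rw [harith] at h
      simpa [h] using hv
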